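/- Assume additionally that O_t(o|s) > 0 for every t ∈ {2,…,H+1}, o ∈ O, s ∈ S. Let π = (π_h)_{h=1}^H be a deterministic policy and define, for h ∈ {1,…,H+1} and an observable history f_h, the value function V^π_h(f_h) := (1/γ)·ln [ ∑_{o_{h+1},…,o_{H+1} ∈ O} (∏_{t=h+1}^{H+1} O'(o_t)) · ∑_{s∈S} σ_{H+1}(s; f_{H+1}) ], where f_{H+1} is generated from f_h, π and the observations (for h = H+1 this reads V^π_{H+1}(f_{H+1}) = (1/γ)·ln ∑_{s∈S} σ_{H+1}(s; f_{H+1})). Then the quantities inside the logarithms are strictly positive, and the Bellman equations hold: for every h ∈ {1,…,H}, every observable history f_h and every action a ∈ A, defining Q^π_h(f_h, a) := (1/γ)·ln ∑_{o∈O} O'(o)·exp(γ·V^π_{h+1}(f_h, a, o)), one has V^π_h(f_h) = Q^π_h(f_h, π_h(f_h)). -/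
import Mathlib


open Finset

noncomputable section

variable {S O A : Type*}

/-- Truncation of a sequence: keep the first `n` values, fill the rest with junk. -/
def truncSeq {X : Type*} [Nonempty X] (f : ℕ → X) (n : ℕ) : ℕ → X :=
  fun t => if t < n then f t else Classical.arbitrary X

/-- Action sequence generated by a policy `π` from observations `obs`, keeping the
prescribed actions `acts` at indices `< n₀`.  At step `n`, the policy only sees the
actions at indices `< n` and the observations at indices `< n`. -/
def genAct [Nonempty A] [Nonempty O] (π : ℕ → (ℕ → A) → (ℕ → O) → A)
    (acts : ℕ → A) (obs : ℕ → O) (n₀ : ℕ) : ℕ → A :=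
  fun n => Nat.strongRecOn n (fun n ih =>
    if n < n₀ then acts n
    else π n (fun t => if ht : t < n then ih t ht else Classical.arbitrary A)
             (fun t => if t < n then obs t else Classical.arbitrary O))

/-- The action chosen by the policy `π` at step `m` given the observable history
recorded in `acts` (indices `< m`) and `obs` (indices `< m`). -/
def polAct [Nonempty A] [Nonempty O] (π : ℕ → (ℕ → A) → (ℕ → O) → A)
    (acts : ℕ → A) (obs : ℕ → O) (m : ℕ) : A :=
  π m (truncSeq acts m) (truncSeq obs m)

/-- Splicing a tail of `k` observations after the first `m` observations of `obs`. -/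
def splice [Nonempty O] (obs : ℕ → O) (m : ℕ) {k : ℕ} (tail : Fin k → O) : ℕ → O :=
  fun t => if t < m then obs t
    else if h : t - m < k then tail ⟨t - m, h⟩ else Classical.arbitrary O

/-- The (unnormalized) risk belief `σ_{n+1}(s; f_{n+1})` (paper index `h = n+1`). -/
def riskBelief [Fintype S] (μ : S → ℝ) (Ttr : ℕ → A → S → S → ℝ)
    (Oem : ℕ → O → S → ℝ) (Oref : O → ℝ) (rew : ℕ → S → A → ℝ) (γ : ℝ)
    (n : ℕ) (acts : ℕ → A) (obs : ℕ → O) (s : S) : ℝ :=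
  ∑ p : Fin n → S,
    let q : Fin (n + 1) → S := Fin.snoc p s
    (μ (q 0) * ∏ t : Fin n, Ttr t (acts t) (q t.castSucc) (q t.succ)) *
      ((∏ t : Fin n, (Oem t (obs t) (q t.succ) / Oref (obs t))) *
        Real.exp (γ * ∑ t : Fin n, rew t (q t.castSucc) (acts t)))

/-- The raw value `∑_{o_{h+1:H+1}} (∏ O'(o_t)) ∑_s σ_{H+1}(s; f_{H+1})` at
step `h = m + 1`; the value function is `V^π_h(f_h) = (1/γ)·ln` of this quantity. -/
def valueRaw [Fintype S] [Fintype O] [Nonempty A] [Nonempty O]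
    (μ : S → ℝ) (Ttr : ℕ → A → S → S → ℝ) (Oem : ℕ → O → S → ℝ) (Oref : O → ℝ)
    (rew : ℕ → S → A → ℝ) (γ : ℝ) (H : ℕ)
    (π : ℕ → (ℕ → A) → (ℕ → O) → A)
    (m : ℕ) (acts : ℕ → A) (obs : ℕ → O) : ℝ :=
  ∑ tail : Fin (H - m) → O,
    (∏ j, Oref (tail j)) *
      ∑ s : S, riskBelief μ Ttr Oem Oref rew γ H
        (genAct π acts (splice obs m tail) m) (splice obs m tail) s

lemma genAct_apply [Nonempty A] [Nonempty O] (π : ℕ → (ℕ → A) → (ℕ → O) → A)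
    (acts : ℕ → A) (obs : ℕ → O) (n₀ n : ℕ) :
    genAct π acts obs n₀ n =
      if n < n₀ then acts n
      else π n (truncSeq (genAct π acts obs n₀) n) (truncSeq obs n) := by
  conv_lhs => rw [genAct]
  rw [Nat.strongRecOn_eq]
  split
  next => rfl
  next => congr 1

lemma genAct_lt [Nonempty A] [Nonempty O] (π : ℕ → (ℕ → A) → (ℕ → O) → A)
    (acts : ℕ → A) (obs : ℕ → O) {n₀ n : ℕ} (h : n < n₀) :
    genAct π acts obs n₀ n = acts n := by
  rw [genAct_apply, if_pos h]

lemma truncSeq_congr {X : Type*} [Nonempty X] {f g : ℕ → X} {m : ℕ}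
    (h : ∀ t, t < m → f t = g t) : truncSeq f m = truncSeq g m := by
  funext t
  unfold truncSeq
  split
  · exact h t ‹_›
  · rfl

lemma genAct_self [Nonempty A] [Nonempty O] (π : ℕ → (ℕ → A) → (ℕ → O) → A)
    (acts : ℕ → A) (obs : ℕ → O) (m : ℕ) :
    genAct π acts obs m m = polAct π acts obs m := by
  rw [genAct_apply, if_neg (lt_irrefl m)]
  unfold polAct
  congr 1
  exact truncSeq_congr fun t ht => genAct_lt π acts obs ht

lemma genAct_shift [Nonempty A] [Nonempty O] (π : ℕ → (ℕ → A) → (ℕ → O) → A)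
    (acts : ℕ → A) (obs : ℕ → O) (m : ℕ) (n : ℕ) :
    genAct π (Function.update acts m (genAct π acts obs m m)) obs (m + 1) n
      = genAct π acts obs m n := by
  induction n using Nat.strongRecOn with
  | _ n ih =>
    rcases lt_trichotomy n m with h | h | h
    · rw [genAct_lt π _ obs (show n < m + 1 by omega), genAct_lt π acts obs h,
        Function.update_of_ne (by omega)]
    · subst h
      rw [genAct_lt π _ obs (by omega), Function.update_self]
    · rw [genAct_apply π _ obs (m+1) n, if_neg (by omega),
        genAct_apply π acts obs m n, if_neg (by omega)]
      congr 1
      exact truncSeq_congr fun t ht => ih t ht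

lemma fin_cons_pos {k : ℕ} {X : Type*} (o : X) (tl : Fin k → X) (i : Fin (k+1))
    (h : 0 < i.val) : (Fin.cons o tl : Fin (k+1) → X) i = tl ⟨i.val - 1, by omega⟩ := by
  induction i using Fin.cases with
  | zero => simp at h
  | succ j => rw [Fin.cons_succ]; congr 1

lemma splice_cons [Nonempty O] (obs : ℕ → O) (m k n : ℕ) (hn : n = k + 1)
    (o : O) (tl : Fin k → O) :
    splice obs m (fun j : Fin n => (Fin.cons o tl : Fin (k+1) → O) (finCongr hn j))
      = splice (Function.update obs m o) (m + 1) tl := by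
  funext t
  unfold splice
  rcases lt_trichotomy t m with h | h | h
  · rw [if_pos h, if_pos (by omega), Function.update_of_ne (by omega)]
  · subst h
    rw [if_neg (lt_irrefl _), if_pos (by omega), Function.update_self,
      dif_pos (show t - t < n by omega)]
    beta_reduce
    have : (finCongr hn ⟨t - t, by omega⟩ : Fin (k+1)) = 0 := by
      ext; simp
    rw [this, Fin.cons_zero]
  · rw [if_neg (by omega), if_neg (by omega)]
    by_cases h2 : t - m < n
    · rw [dif_pos h2, dif_pos (show t - (m+1) < k by omega)]
      beta_reduce
      rw [fin_cons_pos o tl _ (by simp; omega)]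
      congr 1
    · rw [dif_neg h2, dif_neg (by omega)]

lemma valueRaw_succ [Fintype S] [Fintype O] [Nonempty A] [Nonempty O]
    (μ : S → ℝ) (Ttr : ℕ → A → S → S → ℝ) (Oem : ℕ → O → S → ℝ) (Oref : O → ℝ)
    (rew : ℕ → S → A → ℝ) (γ : ℝ) (H : ℕ) (π : ℕ → (ℕ → A) → (ℕ → O) → A)
    (m : ℕ) (hm : m < H) (acts : ℕ → A) (obs : ℕ → O) :
    valueRaw μ Ttr Oem Oref rew γ H π m acts obs
      = ∑ o : O, Oref o * valueRaw μ Ttr Oem Oref rew γ H π (m + 1)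
          (Function.update acts m (polAct π acts obs m)) (Function.update obs m o) := by
  have hk : H - m = (H - (m+1)) + 1 := by omega
  set k := H - (m + 1) with hkdef
  set e : (O × (Fin k → O)) ≃ (Fin (H - m) → O) :=
    (Fin.consEquiv fun _ : Fin (k+1) => O).trans
      (Equiv.arrowCongr (finCongr hk.symm) (Equiv.refl O)) with he
  have hecompute : ∀ (o : O) (tl : Fin k → O),
      e (o, tl) = fun j : Fin (H - m) => (Fin.cons o tl : Fin (k+1) → O) (finCongr hk j) := by
    intro o tl
    funext j
    simp [he, Fin.consEquiv, Equiv.arrowCongr]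
  set F : (Fin (H - m) → O) → ℝ := fun tail =>
    (∏ j, Oref (tail j)) *
      ∑ s : S, riskBelief μ Ttr Oem Oref rew γ H
        (genAct π acts (splice obs m tail) m) (splice obs m tail) s with hF
  set G : O × (Fin k → O) → ℝ := fun p =>
    Oref p.1 * ((∏ j, Oref (p.2 j)) *
      ∑ s : S, riskBelief μ Ttr Oem Oref rew γ H
        (genAct π (Function.update acts m (polAct π acts obs m))
          (splice (Function.update obs m p.1) (m+1) p.2) (m+1))
        (splice (Function.update obs m p.1) (m+1) p.2) s) with hG
  have hcong : ∀ p : O × (Fin k → O), G p = F (e p) := by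
    rintro ⟨o, tl⟩
    rw [hecompute o tl]
    simp only [hF, hG]
    rw [splice_cons obs m k _ hk o tl]
    set obs2 := splice (Function.update obs m o) (m + 1) tl with hobs2
    have hprod : (∏ j : Fin (H - m), Oref ((Fin.cons o tl : Fin (k+1) → O) (finCongr hk j)))
        = Oref o * ∏ j : Fin k, Oref (tl j) := by
      rw [Fintype.prod_equiv (finCongr hk)
        (fun j => Oref ((Fin.cons o tl : Fin (k+1) → O) (finCongr hk j)))
        (fun i => Oref ((Fin.cons o tl : Fin (k+1) → O) i)) (fun j => rfl)]
      rw [Fin.prod_univ_succ]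
      simp
    rw [hprod]
    have hga : genAct π (Function.update acts m (polAct π acts obs m)) obs2 (m+1)
        = genAct π acts obs2 m := by
      have h1 : genAct π acts obs2 m m = polAct π acts obs m := by
        rw [genAct_self]
        unfold polAct
        congr 1
        apply truncSeq_congr
        intro t ht
        rw [hobs2]
        unfold splice
        rw [if_pos (by omega), Function.update_of_ne (by omega)]
      funext n
      rw [← h1]
      exact genAct_shift π acts obs2 m n
    rw [hga]
    ring
  calc (∑ tail : Fin (H - m) → O, F tail)
      = ∑ p : O × (Fin k → O), G p := (Fintype.sum_equiv e G F hcong).symm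
    _ = ∑ o : O, ∑ tl : Fin k → O, G (o, tl) := Fintype.sum_prod_type _
    _ = ∑ o : O, Oref o * valueRaw μ Ttr Oem Oref rew γ H π (m + 1)
          (Function.update acts m (polAct π acts obs m)) (Function.update obs m o) := by
      refine Finset.sum_congr rfl fun o _ => ?_
      rw [hG]
      unfold valueRaw
      rw [Finset.mul_sum]

lemma sum_riskBelief_pos [Fintype S] [Nonempty S]
    (μ : S → ℝ) (Ttr : ℕ → A → S → S → ℝ) (Oem : ℕ → O → S → ℝ) (Oref : O → ℝ)
    (rew : ℕ → S → A → ℝ) (γ : ℝ) (H : ℕ)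
    (hμ0 : ∀ s, 0 ≤ μ s) (hμ1 : ∑ s, μ s = 1)
    (hT0 : ∀ h, h < H → ∀ a s s', 0 ≤ Ttr h a s s')
    (hT1 : ∀ h, h < H → ∀ a s, ∑ s', Ttr h a s s' = 1)
    (hO0 : ∀ t, t < H → ∀ o s, 0 < Oem t o s)
    (hOref0 : ∀ o, 0 < Oref o)
    (acts : ℕ → A) (obs : ℕ → O) :
    0 < ∑ s : S, riskBelief μ Ttr Oem Oref rew γ H acts obs s := by
  -- a state with positive initial mass
  have h0 : ∃ s : S, 0 < μ s := by
    by_contra hc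
    push_neg at hc
    have h1 : ∑ s : S, μ s ≤ 0 := Finset.sum_nonpos fun s _ => hc s
    rw [hμ1] at h1; linarith
  have hstep : ∀ t, ∀ s : S, ∃ s', t < H → 0 < Ttr t (acts t) s s' := by
    intro t s
    by_cases ht : t < H
    · by_contra hc
      push_neg at hc
      have h1 : ∑ s' : S, Ttr t (acts t) s s' ≤ 0 :=
        Finset.sum_nonpos fun s' _ => (hc s').2
      rw [hT1 t ht] at h1; linarith
    · exact ⟨Classical.arbitrary S, fun h => absurd h ht⟩
  -- a positive chain
  set c : ℕ → S := fun n =>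
    Nat.rec (Classical.choose h0) (fun t ih => Classical.choose (hstep t ih)) n with hc
  have hc0 : 0 < μ (c 0) := Classical.choose_spec h0
  have hcs : ∀ t, t < H → 0 < Ttr t (acts t) (c t) (c (t + 1)) :=
    fun t => Classical.choose_spec (hstep t (c t))
  -- nonnegativity of each riskBelief
  have hnn : ∀ (p : Fin H → S) (s : S),
      0 ≤ (μ ((Fin.snoc p s : Fin (H+1) → S) 0) *
        ∏ t : Fin H, Ttr t (acts t) ((Fin.snoc p s : Fin (H+1) → S) t.castSucc)
          ((Fin.snoc p s : Fin (H+1) → S) t.succ)) *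
      ((∏ t : Fin H, (Oem t (obs t) ((Fin.snoc p s : Fin (H+1) → S) t.succ) / Oref (obs t))) *
        Real.exp (γ * ∑ t : Fin H, rew t ((Fin.snoc p s : Fin (H+1) → S) t.castSucc) (acts t))) := by
    intro p s
    refine mul_nonneg (mul_nonneg (hμ0 _) (Finset.prod_nonneg fun t _ => hT0 t t.isLt _ _ _))
      (le_of_lt (mul_pos (Finset.prod_pos fun t _ => div_pos (hO0 t t.isLt _ _) (hOref0 _))
        (Real.exp_pos _)))
  have hrb_nn : ∀ s : S, 0 ≤ riskBelief μ Ttr Oem Oref rew γ H acts obs s := by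
    intro s
    unfold riskBelief
    exact Finset.sum_nonneg fun p _ => hnn p s
  -- positivity at the chain
  set p0 : Fin H → S := fun t => c t with hp0
  have hq : ∀ i : Fin (H + 1), (Fin.snoc p0 (c H) : Fin (H+1) → S) i = c i.val := by
    intro i
    by_cases h : (i : ℕ) < H
    · have hi : i = Fin.castSucc ⟨i.val, h⟩ := by ext; simp
      rw [hi, Fin.snoc_castSucc]
      simp [hp0]
    · have hi : i = Fin.last H := by ext; simp [Fin.last]; omega
      rw [hi, Fin.snoc_last]
      simp [Fin.last]
  have hrb_pos : 0 < riskBelief μ Ttr Oem Oref rew γ H acts obs (c H) := by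
    unfold riskBelief
    refine Finset.sum_pos' (fun p _ => hnn p (c H)) ⟨p0, Finset.mem_univ _, ?_⟩
    refine mul_pos (mul_pos ?_ (Finset.prod_pos fun t _ => ?_))
      (mul_pos (Finset.prod_pos fun t _ => div_pos (hO0 t t.isLt _ _) (hOref0 _))
        (Real.exp_pos _))
    · rw [hq 0]; exact hc0
    · rw [hq t.castSucc, hq t.succ]
      simpa using hcs t t.isLt
  exact Finset.sum_pos' (fun s _ => hrb_nn s) ⟨c H, Finset.mem_univ _, hrb_pos⟩

lemma valueRaw_pos [Fintype S] [Fintype O] [Nonempty S] [Nonempty A] [Nonempty O]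
    (μ : S → ℝ) (Ttr : ℕ → A → S → S → ℝ) (Oem : ℕ → O → S → ℝ) (Oref : O → ℝ)
    (rew : ℕ → S → A → ℝ) (γ : ℝ) (H : ℕ) (π : ℕ → (ℕ → A) → (ℕ → O) → A)
    (hμ0 : ∀ s, 0 ≤ μ s) (hμ1 : ∑ s, μ s = 1)
    (hT0 : ∀ h, h < H → ∀ a s s', 0 ≤ Ttr h a s s')
    (hT1 : ∀ h, h < H → ∀ a s, ∑ s', Ttr h a s s' = 1)
    (hO0 : ∀ t, t < H → ∀ o s, 0 < Oem t o s)
    (hOref0 : ∀ o, 0 < Oref o)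
    (m : ℕ) (acts : ℕ → A) (obs : ℕ → O) :
    0 < valueRaw μ Ttr Oem Oref rew γ H π m acts obs := by
  unfold valueRaw
  refine Finset.sum_pos (fun tail _ => ?_) Finset.univ_nonempty
  exact mul_pos (Finset.prod_pos fun j _ => hOref0 _)
    (sum_riskBelief_pos μ Ttr Oem Oref rew γ H hμ0 hμ1 hT0 hT1 hO0 hOref0 _ _)

/-- Positivity of the quantities inside the logarithms and the Bellman equations:
`V^π_h(f_h) = Q^π_h(f_h, π_h(f_h))`, where
`Q^π_h(f_h, a) = (1/γ)·ln ∑_{o} O'(o)·exp(γ·V^π_{h+1}(f_h, a, o))`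
(paper step `h` is index `m = h - 1`). -/
theorem value_bellman_equations
    [Fintype S] [Fintype O] [Fintype A] [Nonempty S] [Nonempty O] [Nonempty A]
    (H : ℕ) (hH : 1 ≤ H) (γ : ℝ) (hγ : γ ≠ 0)
    (μ : S → ℝ) (Ttr : ℕ → A → S → S → ℝ) (Oem : ℕ → O → S → ℝ) (Oref : O → ℝ)
    (rew : ℕ → S → A → ℝ)
    (hμ0 : ∀ s, 0 ≤ μ s) (hμ1 : ∑ s, μ s = 1)
    (hT0 : ∀ h, h < H → ∀ a s s', 0 ≤ Ttr h a s s')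
    (hT1 : ∀ h, h < H → ∀ a s, ∑ s', Ttr h a s s' = 1)
    (hO0 : ∀ t, t < H → ∀ o s, 0 < Oem t o s)
    (hO1 : ∀ t, t < H → ∀ s, ∑ o, Oem t o s = 1)
    (hOref0 : ∀ o, 0 < Oref o) (hOref1 : ∑ o, Oref o = 1)
    (hr : ∀ h, h < H → ∀ s a, rew h s a ∈ Set.Icc (0 : ℝ) 1)
    (π : ℕ → (ℕ → A) → (ℕ → O) → A) :
    (∀ m, m ≤ H → ∀ (acts : ℕ → A) (obs : ℕ → O),
        0 < valueRaw μ Ttr Oem Oref rew γ H π m acts obs) ∧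
    (∀ m, m < H → ∀ (acts : ℕ → A) (obs : ℕ → O),
        (1 / γ) * Real.log (valueRaw μ Ttr Oem Oref rew γ H π m acts obs) =
          (1 / γ) * Real.log (∑ o : O, Oref o *
            Real.exp (γ * ((1 / γ) * Real.log (valueRaw μ Ttr Oem Oref rew γ H π (m + 1)
              (Function.update acts m (polAct π acts obs m))
              (Function.update obs m o)))))) := by
  have hpos : ∀ m (acts : ℕ → A) (obs : ℕ → O),
      0 < valueRaw μ Ttr Oem Oref rew γ H π m acts obs :=
    fun m acts obs => valueRaw_pos μ Ttr Oem Oref rew γ H π hμ0 hμ1 hT0 hT1 hO0 hOref0 m acts obs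
  refine ⟨fun m _ acts obs => hpos m acts obs, fun m hm acts obs => ?_⟩
  have hexp : ∀ o : O,
      Real.exp (γ * ((1 / γ) * Real.log (valueRaw μ Ttr Oem Oref rew γ H π (m + 1)
        (Function.update acts m (polAct π acts obs m)) (Function.update obs m o))))
      = valueRaw μ Ttr Oem Oref rew γ H π (m + 1)
        (Function.update acts m (polAct π acts obs m)) (Function.update obs m o) := by
    intro o
    rw [show γ * ((1 / γ) * Real.log (valueRaw μ Ttr Oem Oref rew γ H π (m + 1)
        (Function.update acts m (polAct π acts obs m)) (Function.update obs m o)))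
      = Real.log (valueRaw μ Ttr Oem Oref rew γ H π (m + 1)
        (Function.update acts m (polAct π acts obs m)) (Function.update obs m o)) by
        field_simp]
    exact Real.exp_log (hpos _ _ _)
  simp_rw [hexp]
  rw [← valueRaw_succ μ Ttr Oem Oref rew γ H π m hm acts obs]

end
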